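/- arXiv:1001.0638 — 3 statements merged into one kernel-verified Lean document; each statement's English description precedes it below -/
import Mathlib

section
/- Let 0 < α < 2 and, for i = 1, 2, let T_i be a non-singular automorphism of a σ-finite standard Borel measure space (Ω_i, ℱ_i, μ_i), with multiplicative Maharam extension T̃_{i,α} on Ω_i × (0,∞) equipped with the measure μ_i ⊗ s^{-(1+α)}ds. Let (S_t)_{t>0} and (Z_t)_{t>0} denote the flows on Ω_1 × (0,∞) and Ω_2 × (0,∞) respectively given by multiplication of the second coordinate by t. Suppose Φ : Ω_1 × (0,∞) → Ω_2 × (0,∞) is a measurable map with Φ_*(μ_1 ⊗ s^{-(1+α)}ds) = μ_2 ⊗ s^{-(1+α)}ds, Φ ∘ T̃_{1,α} = T̃_{2,α} ∘ Φ almost everywhere, and Φ ∘ S_t = Z_t ∘ Φ almost everywhere for every t > 0. Then there exists a measurable map φ : Ω_1 → Ω_2 which is a non-singular factor map: φ_*μ_1 is equivalent to μ_2 and φ ∘ T_1 = T_2 ∘ φ μ_1-almost everywhere. Moreover, if Φ is a bi-measurable bijection between conull sets, then φ is a bi-measurable bijection between conull sets (a non-singular isomorphism). -/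
/-- A standard Borel space equipped with a σ-finite-to-be measure and a
bi-measurable automorphism. -/
structure StdSystem : Type 1 where
  carrier : Type
  [meas : MeasurableSpace carrier]
  [borel : StandardBorelSpace carrier]
  μ : MeasureTheory.Measure carrier
  T : carrier ≃ᵐ carrier

attribute [instance] StdSystem.meas StdSystem.borel

open MeasureTheory Filter Set
open scoped ENNReal

noncomputable section

noncomputable section

/-- The left shift on two-sided real sequences. -/
def shiftZ : (ℤ → ℝ) → (ℤ → ℝ) := fun x n => x (n + 1)

/-- `T` is a non-singular automorphism of `(Ω, μ)`: the pushforward of `μ` by `T` is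
equivalent to `μ`. -/
def Nonsingular {Ω : Type*} [MeasurableSpace Ω] (T : Ω ≃ᵐ Ω) (μ : Measure Ω) : Prop :=
  Measure.map (⇑T) μ ≪ μ ∧ μ ≪ Measure.map (⇑T) μ

/-- `w_T = d((T⁻¹)_*μ)/dμ`, as a real-valued function. -/
def wgt {Ω : Type*} [MeasurableSpace Ω] (T : Ω ≃ᵐ Ω) (μ : Measure Ω) : Ω → ℝ :=
  fun ω => ((Measure.map (⇑T.symm) μ).rnDeriv μ ω).toReal

/-- `w_{T^n} = d((T^{-n})_*μ)/dμ`, as a real-valued function. -/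
def wgtn {Ω : Type*} [MeasurableSpace Ω] (T : Ω ≃ᵐ Ω) (μ : Measure Ω) (n : ℕ) : Ω → ℝ :=
  fun ω => ((Measure.map ((⇑T.symm)^[n]) μ).rnDeriv μ ω).toReal

/-- The measure `s^{-(1+α)} ds` on `(0,∞)`. -/
def mIoi (α : ℝ) : Measure ℝ :=
  (volume.restrict (Set.Ioi (0:ℝ))).withDensity fun s => ENNReal.ofReal (s ^ (-(1+α)))

/-- The measure `|s|^{-(1+α)} ds` on `ℝ ∖ {0}`. -/
def mSym (α : ℝ) : Measure ℝ :=
  (volume.restrict ({(0:ℝ)}ᶜ)).withDensity fun s => ENNReal.ofReal (|s| ^ (-(1+α)))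

/-- The multiplicative Maharam extension `T̃_α (ω, s) = (Tω, s ⬝ w_T(ω)^{1/α})`. -/
def Mah {Ω : Type*} [MeasurableSpace Ω] (α : ℝ) (T : Ω ≃ᵐ Ω) (μ : Measure Ω) :
    Ω × ℝ → Ω × ℝ :=
  fun p => (T p.1, p.2 * (wgt T μ p.1) ^ (1/α))

/-- The additive Maharam extension `T̃ (ω, s) = (Tω, s − log w_T(ω))`. -/
def MahAdd {Ω : Type*} [MeasurableSpace Ω] (T : Ω ≃ᵐ Ω) (μ : Measure Ω) :
    Ω × ℝ → Ω × ℝ :=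
  fun p => (T p.1, p.2 - Real.log (wgt T μ p.1))

/-- The measure `e^s ds` on `ℝ`. -/
def expMeasure : Measure ℝ := volume.withDensity fun s => ENNReal.ofReal (Real.exp s)

/-- An isomorphism of measure-preserving systems: a bi-measurable bijection `Φ` between
invariant conull subsets carrying `μ` to `ν` and conjugating `T` to `R`. -/
def IsMPIso {X Y : Type*} [MeasurableSpace X] [MeasurableSpace Y]
    (μ : Measure X) (ν : Measure Y) (T : X → X) (R : Y → Y) (Φ : X → Y) : Prop :=
  Measurable Φ ∧ Measure.map Φ μ = ν ∧
  ∃ (A : Set X) (B : Set Y) (Ψ : Y → X),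
    MeasurableSet A ∧ MeasurableSet B ∧ μ Aᶜ = 0 ∧ ν Bᶜ = 0 ∧
    T ⁻¹' A = A ∧ R ⁻¹' B = B ∧ Measurable Ψ ∧
    (∀ x ∈ A, Φ x ∈ B) ∧ (∀ y ∈ B, Ψ y ∈ A) ∧
    (∀ x ∈ A, Ψ (Φ x) = x) ∧ (∀ y ∈ B, Φ (Ψ y) = y) ∧
    (∀ x ∈ A, Φ (T x) = R (Φ x))

/-- A bi-measurable bijection between conull subsets. -/
def AEBij {X Y : Type*} [MeasurableSpace X] [MeasurableSpace Y]
    (μ : Measure X) (ν : Measure Y) (Φ : X → Y) : Prop :=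
  ∃ (A : Set X) (B : Set Y) (Ψ : Y → X),
    MeasurableSet A ∧ MeasurableSet B ∧ μ Aᶜ = 0 ∧ ν Bᶜ = 0 ∧ Measurable Ψ ∧
    (∀ x ∈ A, Φ x ∈ B) ∧ (∀ y ∈ B, Ψ y ∈ A) ∧
    (∀ x ∈ A, Ψ (Φ x) = x) ∧ (∀ y ∈ B, Φ (Ψ y) = y)

/-- `Q` is the Lévy measure of a stationary `α`-stable process on `ℝ^ℤ`. -/
def IsStableLevy (α : ℝ) (Q : Measure (ℤ → ℝ)) : Prop :=
  Measure.map shiftZ Q = Q ∧ Q {x | x = fun _ => 0} = 0 ∧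
  (∫⁻ x, ENNReal.ofReal (min ((x 0)^2) 1) ∂Q) < ⊤ ∧
  ∀ t : ℝ, 0 < t →
    Measure.map (fun x (n : ℤ) => t * x n) Q = ENNReal.ofReal (t ^ (-α)) • Q

/-- The truncation function `c(x) = max(−1, min(x,1))`. -/
def cutoff (x : ℝ) : ℝ := max (-1) (min x 1)

/-- `P` is the law of the stationary infinitely divisible process with Lévy measure `Q`,
as given by the Lévy–Khinchine formula. -/
def IsLevyLaw (Q P : Measure (ℤ → ℝ)) : Prop :=
  IsProbabilityMeasure P ∧ Measure.map shiftZ P = P ∧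
  ∀ (n₁ n₂ : ℤ), n₁ ≤ n₂ → ∀ a : ℤ → ℝ,
    Integrable (fun x : ℤ → ℝ =>
      Complex.exp (Complex.I * ((∑ k ∈ Finset.Icc n₁ n₂, a k * x k : ℝ) : ℂ)) - 1
        - Complex.I * ((∑ k ∈ Finset.Icc n₁ n₂, a k * cutoff (x k) : ℝ) : ℂ)) Q ∧
    (∫ x, Complex.exp (Complex.I * ((∑ k ∈ Finset.Icc n₁ n₂, a k * x k : ℝ) : ℂ)) ∂P)
      = Complex.exp (∫ x,
          (Complex.exp (Complex.I * ((∑ k ∈ Finset.Icc n₁ n₂, a k * x k : ℝ) : ℂ)) - 1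
            - Complex.I * ((∑ k ∈ Finset.Icc n₁ n₂, a k * cutoff (x k) : ℝ) : ℂ)) ∂Q)

/-! Since `Φ` commutes with the dilation flows, the first coordinate of `Φ (ω, s)` is invariant
under every dilation of `s`; exchanging the order of integration twice shows that it is a.e.
independent of `s`, so evaluating it at one generic level `s₀` gives a measurable `φ` with
`(Φ p).1 = φ p.1` a.e. Projecting `Φ_*(μ₁ ⊗ m) = μ₂ ⊗ m`, where `m = mIoi α`, to the first
factor gives `m(0,∞) • φ_*μ₁ = m(0,∞) • μ₂`, hence the equivalence of `φ_*μ₁` and `μ₂`.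
The Maharam extensions are skew products over `T₁, T₂` whose fibre maps are dilations
(`w_T > 0` a.e.), so they are quasi-invariant and the conjugation `Φ ∘ T̃₁ = T̃₂ ∘ Φ` descends
to the first coordinate. An a.e. inverse `Ψ` of `Φ` is again measure preserving and flow
equivariant, and the map `ψ` it induces is an a.e. inverse of `φ`. -/

namespace MeasureTheory.Measure.QuasiMeasurePreserving

variable {α β γ δ : Type*} [MeasurableSpace α] [MeasurableSpace β] [MeasurableSpace γ]
  [MeasurableSpace δ] {μa : Measure α} {μb : Measure β} {μc : Measure γ} {μd : Measure δ}

theorem skew_product [SFinite μa] [SFinite μb] [SFinite μc] [SFinite μd] {f : α → β}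
    (hf : QuasiMeasurePreserving f μa μb) {g : α → γ → δ} (hgm : Measurable (Function.uncurry g))
    (hg : ∀ᵐ x ∂μa, QuasiMeasurePreserving (g x) μc μd) :
    QuasiMeasurePreserving (fun p : α × γ => (f p.1, g p.1 p.2)) (μa.prod μc) (μb.prod μd) := by
  have hfiber : QuasiMeasurePreserving (fun p : α × γ => (p.1, g p.1 p.2))
      (μa.prod μc) (μa.prod μd) := by
    have hm : Measurable fun p : α × γ => (p.1, g p.1 p.2) := measurable_fst.prodMk hgm
    refine ⟨hm, .mk fun s hs hs0 => ?_⟩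
    rw [map_apply hm hs, measure_prod_null (hm hs)]
    filter_upwards [(measure_prod_null hs).1 hs0, hg] with x hx hgx
    exact hgx.preimage_null hx
  exact (MeasureTheory.QuasiMeasurePreserving.prodMap hf (.id μd)).comp hfiber

theorem ae_comp_eq_of_ae_inverse {Φ : α → β} {Ψ : β → α} {S : α → α} {Z : β → β}
    (hΨ : QuasiMeasurePreserving Ψ μb μa) (hS : QuasiMeasurePreserving S μa μa)
    (hΨΦ : ∀ᵐ x ∂μa, Ψ (Φ x) = x) (hΦΨ : ∀ᵐ y ∂μb, Φ (Ψ y) = y)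
    (hconj : ∀ᵐ x ∂μa, Φ (S x) = Z (Φ x)) :
    ∀ᵐ y ∂μb, Ψ (Z y) = S (Ψ y) := by
  filter_upwards [hΦΨ, hΨ.ae hconj, hΨ.ae (hS.ae hΨΦ)] with y hy hconj_y hinv_y
  rw [← hinv_y, hconj_y, hy]

end MeasureTheory.Measure.QuasiMeasurePreserving

section Dilation

open Measure

variable {X Y : Type*} [MeasurableSpace X] [MeasurableSpace Y] {μ : Measure X} [SigmaFinite μ]
  {m : Measure ℝ} [SigmaFinite m]

theorem exists_measurable_ae_eq_comp_fst_of_dilation_invariant [MeasurableEq Y] [NeZero m]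
    (hm_pos : ∀ᵐ s ∂m, 0 < s) (hm_dil : ∀ c : ℝ, 0 < c → QuasiMeasurePreserving (c * ·) m m)
    {F : X × ℝ → Y} (hF : Measurable F)
    (hinv : ∀ t : ℝ, 0 < t → ∀ᵐ p ∂(μ.prod m), F (p.1, t * p.2) = F p) :
    ∃ φ : X → Y, Measurable φ ∧ ∀ᵐ p ∂(μ.prod m), F p = φ p.1 := by
  have hmeas_flow : MeasurableSet {x : ℝ × (X × ℝ) | F (x.2.1, x.1 * x.2.2) = F x.2} :=
    measurableSet_eq_fun (by fun_prop) (by fun_prop)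
  have h_swap : ∀ᵐ p ∂(μ.prod m), ∀ᵐ t ∂m, F (p.1, t * p.2) = F p :=
    (ae_ae_comm hmeas_flow).1 (hm_pos.mono hinv)
  have h_level : ∀ᵐ p ∂(μ.prod m), ∀ᵐ u ∂m, F (p.1, u) = F p := by
    filter_upwards [h_swap, quasiMeasurePreserving_snd.ae hm_pos] with p hp hp_pos
    -- the substitution `t = u / p.2`, allowed because `m` is quasi-invariant under dilations
    filter_upwards [(hm_dil _ (inv_pos.2 hp_pos)).ae hp] with u hu
    rwa [show p.2⁻¹ * u * p.2 = u by field_simp] at hu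
  have hmeas_level : MeasurableSet {x : (X × ℝ) × ℝ | F (x.1.1, x.2) = F x.1} :=
    measurableSet_eq_fun (by fun_prop) (by fun_prop)
  obtain ⟨s₀, hs₀⟩ := ((ae_ae_comm hmeas_level).1 h_level).exists
  exact ⟨fun x => F (x, s₀), by fun_prop, hs₀.mono fun _ h => h.symm⟩

end Dilation

section FactorThroughFst

open Measure

variable {X₁ X₂ Y : Type*} [MeasurableSpace X₁] [MeasurableSpace Y] {μ₁ : Measure X₁}
  {ν : Measure Y} [SFinite ν] [NeZero ν] {Φ : X₁ × Y → X₂ × Y} {φ : X₁ → X₂}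

theorem ae_of_ae_prod_fst {P : X₁ → Prop} (h : ∀ᵐ p ∂(μ₁.prod ν), P p.1) : ∀ᵐ x ∂μ₁, P x :=
  (ae_ae_of_ae_prod h).mono fun _ hx => hx.exists.choose_spec

theorem absolutelyContinuous_map_of_fst_ae_eq [MeasurableSpace X₂] {μ₂ : Measure X₂}
    (hΦ : MeasurePreserving Φ (μ₁.prod ν) (μ₂.prod ν)) (hφm : Measurable φ)
    (hφ : ∀ᵐ p ∂(μ₁.prod ν), (Φ p).1 = φ p.1) :
    map φ μ₁ ≪ μ₂ ∧ μ₂ ≪ map φ μ₁ := by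
  have hscaled : ν univ • map φ μ₁ = ν univ • μ₂ := by
    calc ν univ • map φ μ₁ = map φ (map Prod.fst (μ₁.prod ν)) := by
          rw [Measure.map_fst_prod, Measure.map_smul]
      _ = map (fun p => φ p.1) (μ₁.prod ν) := map_map hφm measurable_fst
      _ = map (fun p => (Φ p).1) (μ₁.prod ν) := map_congr (hφ.mono fun _ h => h.symm)
      _ = map Prod.fst (map Φ (μ₁.prod ν)) := (map_map measurable_fst hΦ.measurable).symm
      _ = ν univ • μ₂ := by rw [hΦ.map_eq, Measure.map_fst_prod]
  have hν : ν univ ≠ 0 := measure_univ_ne_zero.2 (NeZero.ne ν)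
  exact ⟨(absolutelyContinuous_smul hν).trans (hscaled ▸ smul_absolutelyContinuous),
    (absolutelyContinuous_smul hν).trans (hscaled ▸ smul_absolutelyContinuous)⟩

theorem ae_comp_eq_of_fst_ae_eq {S₁ : X₁ × Y → X₁ × Y} {S₂ : X₂ × Y → X₂ × Y}
    {T₁ : X₁ → X₁} {T₂ : X₂ → X₂} (hS₁ : QuasiMeasurePreserving S₁ (μ₁.prod ν) (μ₁.prod ν))
    (hT₁ : ∀ p, (S₁ p).1 = T₁ p.1) (hT₂ : ∀ q, (S₂ q).1 = T₂ q.1)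
    (hconj : ∀ᵐ p ∂(μ₁.prod ν), Φ (S₁ p) = S₂ (Φ p))
    (hφ : ∀ᵐ p ∂(μ₁.prod ν), (Φ p).1 = φ p.1) :
    ∀ᵐ x ∂μ₁, φ (T₁ x) = T₂ (φ x) := by
  refine ae_of_ae_prod_fst (ν := ν) ?_
  filter_upwards [hconj, hφ, hS₁.ae hφ] with p hconj_p hφ_p hφ_Sp
  rw [← hT₁, ← hφ_Sp, hconj_p, hT₂, hφ_p]

theorem ae_inverse_of_fst_ae_eq [MeasurableSpace X₂] {μ₂ : Measure X₂} {Ψ : X₂ × Y → X₁ × Y}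
    {ψ : X₂ → X₁}
    (hΦ : QuasiMeasurePreserving Φ (μ₁.prod ν) (μ₂.prod ν))
    (hφ : ∀ᵐ p ∂(μ₁.prod ν), (Φ p).1 = φ p.1) (hψ : ∀ᵐ q ∂(μ₂.prod ν), (Ψ q).1 = ψ q.1)
    (hΨΦ : ∀ᵐ p ∂(μ₁.prod ν), Ψ (Φ p) = p) :
    ∀ᵐ x ∂μ₁, ψ (φ x) = x := by
  refine ae_of_ae_prod_fst (ν := ν) ?_
  filter_upwards [hφ, hΦ.ae hψ, hΨΦ] with p hφ_p hψ_Φp hΨΦ_p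
  rw [← hφ_p, ← hψ_Φp, hΨΦ_p]

end FactorThroughFst

section AEInverse

open Measure

variable {X Y : Type*} [MeasurableSpace X] [MeasurableSpace Y] {μ : Measure X} {ν : Measure Y}

theorem AEBij.exists_ae_inverse {Φ : X → Y} (h : AEBij μ ν Φ) :
    ∃ Ψ : Y → X, Measurable Ψ ∧ (∀ᵐ x ∂μ, Ψ (Φ x) = x) ∧ ∀ᵐ y ∂ν, Φ (Ψ y) = y := by
  obtain ⟨A, B, Ψ, -, -, hA, hB, hΨm, -, -, hΨΦ, hΦΨ⟩ := h
  exact ⟨Ψ, hΨm, measure_eq_zero_iff_ae_notMem.1 hA |>.mono fun x hx => hΨΦ x (by simpa using hx),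
    measure_eq_zero_iff_ae_notMem.1 hB |>.mono fun y hy => hΦΨ y (by simpa using hy)⟩

theorem MeasureTheory.MeasurePreserving.of_ae_inverse {Φ : X → Y} {Ψ : Y → X}
    (hΦ : MeasurePreserving Φ μ ν) (hΨm : Measurable Ψ) (hΨΦ : ∀ᵐ x ∂μ, Ψ (Φ x) = x) :
    MeasurePreserving Ψ ν μ := by
  refine ⟨hΨm, ?_⟩
  rw [← hΦ.map_eq, map_map hΨm hΦ.measurable]
  exact (Measure.map_congr hΨΦ).trans map_id'

theorem aeBij_of_ae_inverse [MeasurableEq X] [MeasurableEq Y] {φ : X → Y} {ψ : Y → X}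
    (hφ : QuasiMeasurePreserving φ μ ν) (hψ : QuasiMeasurePreserving ψ ν μ)
    (hψφ : ∀ᵐ x ∂μ, ψ (φ x) = x) (hφψ : ∀ᵐ y ∂ν, φ (ψ y) = y) : AEBij μ ν φ := by
  set A : Set X := {x | ψ (φ x) = x} ∩ φ ⁻¹' {y | φ (ψ y) = y}
  set B : Set Y := {y | φ (ψ y) = y} ∩ ψ ⁻¹' {x | ψ (φ x) = x}
  have hA : ∀ᵐ x ∂μ, x ∈ A := hψφ.and (hφ.ae hφψ)
  have hB : ∀ᵐ y ∂ν, y ∈ B := hφψ.and (hψ.ae hψφ)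
  refine ⟨A, B, ψ, ?_, ?_, ae_iff.1 hA, ae_iff.1 hB, hψ.measurable, ?_, ?_, fun x hx => hx.1,
    fun y hy => hy.1⟩
  · exact (measurableSet_eq_fun (by fun_prop) measurable_id).inter
      (hφ.measurable (measurableSet_eq_fun (by fun_prop) measurable_id))
  · exact (measurableSet_eq_fun (by fun_prop) measurable_id).inter
      (hψ.measurable (measurableSet_eq_fun (by fun_prop) measurable_id))
  · rintro x ⟨hx : ψ (φ x) = x, hφx⟩
    exact ⟨hφx, show ψ (φ (ψ (φ x))) = ψ (φ x) by rw [hx, hx]⟩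
  · rintro y ⟨hy : φ (ψ y) = y, hψy⟩
    exact ⟨hψy, show φ (ψ (φ (ψ y))) = φ (ψ y) by rw [hy, hy]⟩

end AEInverse

section MIoi

variable (α : ℝ)

instance : SigmaFinite (mIoi α) := by
  unfold mIoi; infer_instance

theorem mIoi_absolutelyContinuous : mIoi α ≪ volume.restrict (Ioi 0) :=
  withDensity_absolutelyContinuous _ _

theorem absolutelyContinuous_mIoi : volume.restrict (Ioi 0) ≪ mIoi α :=
  withDensity_absolutelyContinuous' (by fun_prop)
    (ae_restrict_of_forall_mem measurableSet_Ioi fun s (hs : 0 < s) => by positivity)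

instance : NeZero (mIoi α) :=
  ⟨fun h => by simpa [h, Real.volume_Ioi] using absolutelyContinuous_mIoi α (s := Set.univ)⟩

theorem ae_mIoi_pos : ∀ᵐ s ∂(mIoi α), 0 < s :=
  (mIoi_absolutelyContinuous α).ae_le (ae_restrict_mem measurableSet_Ioi)

variable {α} in
theorem quasiMeasurePreserving_mul_mIoi {c : ℝ} (hc : 0 < c) :
    Measure.QuasiMeasurePreserving (c * ·) (mIoi α) (mIoi α) := by
  have hvol : Measure.QuasiMeasurePreserving (c * ·) volume volume :=
    ⟨measurable_const_mul c, by
      rw [Real.map_volume_mul_left hc.ne']; exact Measure.smul_absolutelyContinuous⟩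
  exact (hvol.restrict fun s (hs : 0 < s) => mul_pos hc hs).mono
    (mIoi_absolutelyContinuous α) (absolutelyContinuous_mIoi α)

end MIoi

section Maharam

variable {Ω : Type*} [MeasurableSpace Ω] {μ : Measure Ω} [SigmaFinite μ] {T : Ω ≃ᵐ Ω}

theorem ae_wgt_pos (hT : Measure.map T μ ≪ μ) : ∀ᵐ ω ∂μ, 0 < wgt T μ ω := by
  have hμ : μ ≪ Measure.map T.symm μ := by
    simpa only [T.map_symm_map] using hT.map T.symm.measurable
  have : SigmaFinite (Measure.map T.symm μ) := T.symm.sigmaFinite_map (μ := μ)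
  filter_upwards [Measure.rnDeriv_pos' hμ, Measure.rnDeriv_lt_top (Measure.map T.symm μ) μ]
    with ω hpos hfin
  exact ENNReal.toReal_pos hpos.ne' hfin.ne

theorem quasiMeasurePreserving_mah (α : ℝ) (hT : Measure.map T μ ≪ μ) :
    Measure.QuasiMeasurePreserving (Mah α T μ) (μ.prod (mIoi α)) (μ.prod (mIoi α)) := by
  have hwm : Measurable fun ω => wgt T μ ω ^ (1 / α) :=
    (Measure.measurable_rnDeriv _ _).ennreal_toReal.pow_const _
  refine Measure.QuasiMeasurePreserving.skew_product (g := fun ω s => s * wgt T μ ω ^ (1 / α))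
    ⟨T.measurable, hT⟩ (measurable_snd.mul (hwm.comp measurable_fst)) ?_
  filter_upwards [ae_wgt_pos hT] with ω hω
  simpa only [mul_comm] using
    quasiMeasurePreserving_mul_mIoi (α := α) (Real.rpow_pos_of_pos hω (1 / α))

theorem quasiMeasurePreserving_dilation {α t : ℝ} (ht : 0 < t) :
    Measure.QuasiMeasurePreserving (fun p : Ω × ℝ => (p.1, t * p.2))
      (μ.prod (mIoi α)) (μ.prod (mIoi α)) :=
  (Measure.QuasiMeasurePreserving.id μ).skew_product (g := fun _ s => t * s) (by fun_prop)
    (ae_of_all _ fun _ => quasiMeasurePreserving_mul_mIoi ht)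

end Maharam

theorem exists_measurable_fst_ae_eq_of_dilation_equivariant {Ω₁ Ω₂ : Type*} [MeasurableSpace Ω₁]
    [MeasurableSpace Ω₂] [MeasurableEq Ω₂] {α : ℝ} {μ₁ : Measure Ω₁} [SigmaFinite μ₁]
    {Φ : Ω₁ × ℝ → Ω₂ × ℝ} (hΦm : Measurable Φ)
    (hΦflow : ∀ t : ℝ, 0 < t → ∀ᵐ p ∂(μ₁.prod (mIoi α)),
      Φ (p.1, t * p.2) = ((Φ p).1, t * (Φ p).2)) :
    ∃ φ : Ω₁ → Ω₂, Measurable φ ∧ ∀ᵐ p ∂(μ₁.prod (mIoi α)), (Φ p).1 = φ p.1 :=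
  exists_measurable_ae_eq_comp_fst_of_dilation_invariant (F := fun p => (Φ p).1)
    (ae_mIoi_pos α) (fun _ hc => quasiMeasurePreserving_mul_mIoi hc) (measurable_fst.comp hΦm)
    fun t ht => (hΦflow t ht).mono fun _ hp => (congrArg Prod.fst hp :)

theorem maharam_factor_descends_general
    {Ω₁ Ω₂ : Type*} [MeasurableSpace Ω₁] [StandardBorelSpace Ω₁]
    [MeasurableSpace Ω₂] [StandardBorelSpace Ω₂]
    (α : ℝ)
    (μ₁ : Measure Ω₁) [SigmaFinite μ₁] (μ₂ : Measure Ω₂) [SigmaFinite μ₂]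
    (T₁ : Ω₁ ≃ᵐ Ω₁) (hT₁ : Nonsingular T₁ μ₁)
    (T₂ : Ω₂ ≃ᵐ Ω₂)
    (Φ : Ω₁ × ℝ → Ω₂ × ℝ) (hΦm : Measurable Φ)
    (hΦmap : Measure.map Φ (μ₁.prod (mIoi α)) = μ₂.prod (mIoi α))
    (hΦconj : ∀ᵐ p ∂(μ₁.prod (mIoi α)), Φ (Mah α T₁ μ₁ p) = Mah α T₂ μ₂ (Φ p))
    (hΦflow : ∀ t : ℝ, 0 < t → ∀ᵐ p ∂(μ₁.prod (mIoi α)),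
      Φ (p.1, t * p.2) = ((Φ p).1, t * (Φ p).2)) :
    ∃ φ : Ω₁ → Ω₂, Measurable φ ∧
      Measure.map φ μ₁ ≪ μ₂ ∧ μ₂ ≪ Measure.map φ μ₁ ∧
      (∀ᵐ ω ∂μ₁, φ (T₁ ω) = T₂ (φ ω)) ∧
      (AEBij (μ₁.prod (mIoi α)) (μ₂.prod (mIoi α)) Φ → AEBij μ₁ μ₂ φ) := by
  have hΦ : MeasurePreserving Φ (μ₁.prod (mIoi α)) (μ₂.prod (mIoi α)) := ⟨hΦm, hΦmap⟩
  obtain ⟨φ, hφm, hφ⟩ := exists_measurable_fst_ae_eq_of_dilation_equivariant hΦm hΦflow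
  have hφac := absolutelyContinuous_map_of_fst_ae_eq hΦ hφm hφ
  refine ⟨φ, hφm, hφac.1, hφac.2, ae_comp_eq_of_fst_ae_eq (quasiMeasurePreserving_mah α hT₁.1)
    (fun _ => rfl) (fun _ => rfl) hΦconj hφ, fun hbij => ?_⟩
  obtain ⟨Ψ, hΨm, hΨΦ, hΦΨ⟩ := hbij.exists_ae_inverse
  have hΨ := hΦ.of_ae_inverse hΨm hΨΦ
  have hΨflow (t : ℝ) (ht : 0 < t) : ∀ᵐ q ∂(μ₂.prod (mIoi α)),
      Ψ (q.1, t * q.2) = ((Ψ q).1, t * (Ψ q).2) :=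
    hΨ.quasiMeasurePreserving.ae_comp_eq_of_ae_inverse (Z := fun q => (q.1, t * q.2))
      (quasiMeasurePreserving_dilation ht) hΨΦ hΦΨ (hΦflow t ht)
  obtain ⟨ψ, hψm, hψ⟩ := exists_measurable_fst_ae_eq_of_dilation_equivariant hΨm hΨflow
  exact aeBij_of_ae_inverse ⟨hφm, hφac.1⟩
    ⟨hψm, (absolutelyContinuous_map_of_fst_ae_eq hΨ hψm hψ).1⟩
    (ae_inverse_of_fst_ae_eq hΦ.quasiMeasurePreserving hφ hψ hΨΦ)
    (ae_inverse_of_fst_ae_eq hΨ.quasiMeasurePreserving hψ hφ hΦΨ)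

/-- a factor map between two multiplicative Maharam extensions commuting with
the multiplication flows descends to a non-singular factor map between the base systems;
if the map is an a.e. bijection, the induced map is a non-singular isomorphism. -/
theorem maharam_factor_descends
    {Ω₁ Ω₂ : Type*} [MeasurableSpace Ω₁] [StandardBorelSpace Ω₁]
    [MeasurableSpace Ω₂] [StandardBorelSpace Ω₂]
    (α : ℝ) (hα : 0 < α) (hα2 : α < 2)
    (μ₁ : Measure Ω₁) [SigmaFinite μ₁] (μ₂ : Measure Ω₂) [SigmaFinite μ₂]
    (T₁ : Ω₁ ≃ᵐ Ω₁) (hT₁ : Nonsingular T₁ μ₁)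
    (T₂ : Ω₂ ≃ᵐ Ω₂) (hT₂ : Nonsingular T₂ μ₂)
    (Φ : Ω₁ × ℝ → Ω₂ × ℝ) (hΦm : Measurable Φ)
    (hΦmap : Measure.map Φ (μ₁.prod (mIoi α)) = μ₂.prod (mIoi α))
    (hΦconj : ∀ᵐ p ∂(μ₁.prod (mIoi α)), Φ (Mah α T₁ μ₁ p) = Mah α T₂ μ₂ (Φ p))
    (hΦflow : ∀ t : ℝ, 0 < t → ∀ᵐ p ∂(μ₁.prod (mIoi α)),
      Φ (p.1, t * p.2) = ((Φ p).1, t * (Φ p).2)) :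
    ∃ φ : Ω₁ → Ω₂, Measurable φ ∧
      Measure.map φ μ₁ ≪ μ₂ ∧ μ₂ ≪ Measure.map φ μ₁ ∧
      (∀ᵐ ω ∂μ₁, φ (T₁ ω) = T₂ (φ ω)) ∧
      (AEBij (μ₁.prod (mIoi α)) (μ₂.prod (mIoi α)) Φ → AEBij μ₁ μ₂ φ) :=
  maharam_factor_descends_general α μ₁ μ₂ T₁ hT₁ T₂ Φ hΦm hΦmap hΦconj hΦflow
end
end
end

section
/- Let Q be a σ-finite measure on ℝ^ℤ invariant under the left shift S. Then Q is ergodic for S (every S-invariant measurable set is either Q-null or has Q-null complement) if and only if for every decomposition Q = Q₁ + Q₂ into two σ-finite S-invariant measures Q₁, Q₂ there exists a constant c ∈ [0, 1] such that Q₁ = c · Q and Q₂ = (1 − c) · Q. -/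
open MeasureTheory Filter Set
open scoped ENNReal

noncomputable section

noncomputable section

section

variable {α : Type*} [MeasurableSpace α] {μ ν : Measure α} {f : α → α}

theorem MeasureTheory.Measure.eq_one_of_smul_eq_self [SigmaFinite μ] (hμ : μ ≠ 0) {c : ℝ≥0∞}
    (h : c • μ = μ) : c = 1 := by
  obtain ⟨n, hn⟩ := exists_measure_pos_of_not_measure_iUnion_null (μ := μ) (s := spanningSets μ)
    (by rwa [iUnion_spanningSets, Ne, measure_univ_eq_zero])
  rw [← ENNReal.mul_eq_right hn.ne' (measure_spanningSets_lt_top μ n).ne]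
  simpa using congrArg (· (spanningSets μ n)) h

theorem preErgodic_iff_measure_eq_zero_or_compl :
    PreErgodic f μ ↔ ∀ s, MeasurableSet s → f ⁻¹' s = s → μ s = 0 ∨ μ sᶜ = 0 := by
  refine ⟨fun hf _ hs hfs => hf.measure_self_or_compl_eq_zero hs hfs, fun h => ⟨fun s hs hfs => ?_⟩⟩
  simpa [eventuallyConst_set'] using h s hs hfs

theorem Ergodic.eq_smul_of_absolutelyContinuous_of_measurableEmbedding [SigmaFinite μ]
    [SigmaFinite ν] (hμ : Ergodic f μ) (hf : MeasurableEmbedding f)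
    (hfν : MeasurePreserving f ν ν) (hνμ : ν ≪ μ) : ∃ c : ℝ≥0∞, ν = c • μ := by
  have hinv : (fun x => ν.rnDeriv μ (f x)) =ᵐ[μ] ν.rnDeriv μ := by
    simpa only [hfν.map_eq, hμ.map_eq] using hf.rnDeriv_map ν μ
  obtain ⟨c, hc⟩ := hμ.ae_eq_const_of_ae_eq_comp₀
    (Measure.measurable_rnDeriv ν μ).nullMeasurable hinv
  refine ⟨c, ?_⟩
  rw [← Measure.withDensity_rnDeriv_eq ν μ hνμ, withDensity_congr_ae hc]
  exact withDensity_const c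

theorem Ergodic.exists_eq_smul_of_eq_add [SigmaFinite μ] (hμ : Ergodic f μ)
    (hf : MeasurableEmbedding f) {ν₁ ν₂ : Measure α} [SigmaFinite ν₁] [SigmaFinite ν₂]
    (hfν₁ : MeasurePreserving f ν₁ ν₁) (hfν₂ : MeasurePreserving f ν₂ ν₂) (hμν : μ = ν₁ + ν₂) :
    ∃ c : ℝ≥0∞, c ≤ 1 ∧ ν₁ = c • μ ∧ ν₂ = (1 - c) • μ := by
  obtain ⟨c₁, rfl⟩ := hμ.eq_smul_of_absolutelyContinuous_of_measurableEmbedding hf hfν₁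
    (Measure.absolutelyContinuous_of_le (hμν ▸ Measure.le_add_right le_rfl))
  obtain ⟨c₂, rfl⟩ := hμ.eq_smul_of_absolutelyContinuous_of_measurableEmbedding hf hfν₂
    (Measure.absolutelyContinuous_of_le (hμν ▸ Measure.le_add_left le_rfl))
  rcases eq_or_ne μ 0 with rfl | hμ₀
  · exact ⟨0, zero_le_one, by simp, by simp⟩
  have hc : c₁ + c₂ = 1 := Measure.eq_one_of_smul_eq_self hμ₀ (by rw [add_smul, ← hμν])
  have hc₁ : c₁ ≤ 1 := hc ▸ le_self_add
  refine ⟨c₁, hc₁, rfl, ?_⟩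
  rw [← hc, ENNReal.add_sub_cancel_left (ne_top_of_le_ne_top ENNReal.one_ne_top hc₁)]

theorem PreErgodic.of_forall_eq_smul_of_eq_add [SigmaFinite μ] (hf : MeasurePreserving f μ μ)
    (h : ∀ ν₁ ν₂ : Measure α, SigmaFinite ν₁ → SigmaFinite ν₂ → MeasurePreserving f ν₁ ν₁ →
      MeasurePreserving f ν₂ ν₂ → μ = ν₁ + ν₂ → ∃ c : ℝ≥0∞, ν₁ = c • μ) :
    PreErgodic f μ := by
  refine preErgodic_iff_measure_eq_zero_or_compl.2 fun s hs hfs => ?_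
  have hfsc : f ⁻¹' sᶜ = sᶜ := by rw [preimage_compl, hfs]
  obtain ⟨c, hc⟩ := h (μ.restrict s) (μ.restrict sᶜ) inferInstance inferInstance
    (by simpa only [hfs] using hf.restrict_preimage hs)
    (by simpa only [hfsc] using hf.restrict_preimage hs.compl)
    (Measure.restrict_add_restrict_compl hs).symm
  have hs_eq : μ s = c * μ s := by simpa [hs] using congrArg (· s) hc
  have hsc_eq : 0 = c * μ sᶜ := by simpa [hs] using congrArg (· sᶜ) hc
  rcases mul_eq_zero.1 hsc_eq.symm with rfl | hsc
  · exact Or.inl (by simpa using hs_eq)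
  · exact Or.inr hsc

end

theorem measurableEmbedding_shiftZ : MeasurableEmbedding shiftZ :=
  ({ toFun := shiftZ
     invFun := fun x n => x (n - 1)
     left_inv := fun x => funext fun n => by simp [shiftZ]
     right_inv := fun x => funext fun n => by simp [shiftZ]
     measurable_toFun := measurable_pi_lambda _ fun n => measurable_pi_apply (n + 1)
     measurable_invFun := measurable_pi_lambda _ fun n => measurable_pi_apply (n - 1) } :
    (ℤ → ℝ) ≃ᵐ (ℤ → ℝ)).measurableEmbedding

/-- a σ-finite shift-invariant measure `Q` on `ℝ^ℤ` is ergodic iff the only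
decompositions `Q = Q₁ + Q₂` into σ-finite shift-invariant measures are the trivial ones
`Q₁ = c·Q`, `Q₂ = (1−c)·Q` with `c ∈ [0,1]`. -/
theorem ergodic_iff_pure_decomposition
    (Q : Measure (ℤ → ℝ)) [SigmaFinite Q] (hinv : Measure.map shiftZ Q = Q) :
    (∀ A : Set (ℤ → ℝ), MeasurableSet A → shiftZ ⁻¹' A = A → Q A = 0 ∨ Q Aᶜ = 0) ↔
    (∀ Q₁ Q₂ : Measure (ℤ → ℝ), SigmaFinite Q₁ → SigmaFinite Q₂ →
      Measure.map shiftZ Q₁ = Q₁ → Measure.map shiftZ Q₂ = Q₂ → Q = Q₁ + Q₂ →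
      ∃ c : ℝ≥0∞, c ≤ 1 ∧ Q₁ = c • Q ∧ Q₂ = (1 - c) • Q) := by
  have hshift : MeasurePreserving shiftZ Q Q := ⟨measurableEmbedding_shiftZ.measurable, hinv⟩
  rw [← preErgodic_iff_measure_eq_zero_or_compl]
  constructor
  · intro hQ Q₁ Q₂ _ _ h₁ h₂ hQ₁₂
    exact Ergodic.exists_eq_smul_of_eq_add ⟨hshift, hQ⟩ measurableEmbedding_shiftZ
      ⟨hshift.measurable, h₁⟩ ⟨hshift.measurable, h₂⟩ hQ₁₂
  · intro hpure
    refine PreErgodic.of_forall_eq_smul_of_eq_add hshift fun Q₁ Q₂ _ _ h₁ h₂ hQ₁₂ => ?_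
    obtain ⟨c, -, hc, -⟩ := hpure Q₁ Q₂ ‹_› ‹_› h₁.map_eq h₂.map_eq hQ₁₂
    exact ⟨c, hc⟩
end
end
end

section
/- Let T be a non-singular automorphism of a probability space (Ω, ℱ, μ) and write w_{T^n} = d((T^{-n})_*μ)/dμ. If ∫_Ω √(w_{T^n}(ω)) μ(dω) → 0 as n → ∞, then for every f ∈ L²(μ), ⟨U_T^n f, f⟩_{L²(μ)} → 0 as n → ∞. -/
open MeasureTheory Filter Set
open scoped ENNReal

noncomputable section

noncomputable section

open scoped Topology

namespace Nonsingular

variable {Ω : Type*} [MeasurableSpace Ω] {μ : Measure Ω} {T : Ω ≃ᵐ Ω}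

theorem quasiMeasurePreserving (hT : Nonsingular T μ) :
    Measure.QuasiMeasurePreserving T μ μ :=
  ⟨T.measurable, hT.1⟩

theorem quasiMeasurePreserving_symm (hT : Nonsingular T μ) :
    Measure.QuasiMeasurePreserving T.symm μ μ := by
  refine ⟨T.symm.measurable, ?_⟩
  simpa [Measure.map_map T.symm.measurable T.measurable] using hT.2.map T.symm.measurable

end Nonsingular

theorem lintegral_rnDeriv_map_mul_comp {α β : Type*} [MeasurableSpace α] [MeasurableSpace β]
    {μ : Measure α} {ν : Measure β} {ψ : α → β} {φ : β → α} (hψ : Measurable ψ)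
    (hφ : Measurable φ) (hφψ : Function.LeftInverse φ ψ) (hac : μ.map ψ ≪ ν)
    [(μ.map ψ).HaveLebesgueDecomposition ν] {G : α → ℝ≥0∞} (hG : Measurable G) :
    ∫⁻ y, (μ.map ψ).rnDeriv ν y * G (φ y) ∂ν = ∫⁻ x, G x ∂μ := by
  rw [lintegral_rnDeriv_mul (f := fun y => G (φ y)) hac (hG.comp hφ).aemeasurable,
    lintegral_map (f := fun y => G (φ y)) (hG.comp hφ) hψ]
  simp only [hφψ _]

/-- The unitary operator `U_T^n` of `L²(μ)`. -/
def weightedKoopman {Ω : Type*} [MeasurableSpace Ω] (T : Ω ≃ᵐ Ω) (μ : Measure Ω) (n : ℕ)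
    (f : Ω → ℝ) : Ω → ℝ :=
  fun ω => √(wgtn T μ n ω) * f ((⇑T)^[n] ω)

section weightedKoopman

variable {Ω : Type*} [MeasurableSpace Ω] {μ : Measure Ω} {T : Ω ≃ᵐ Ω} {n : ℕ} {f g : Ω → ℝ}

theorem measurable_wgtn : Measurable (wgtn T μ n) :=
  (Measure.measurable_rnDeriv _ _).ennreal_toReal

theorem wgtn_nonneg (ω : Ω) : 0 ≤ wgtn T μ n ω :=
  ENNReal.toReal_nonneg

theorem weightedKoopman_sub : weightedKoopman T μ n (f - g) =
    weightedKoopman T μ n f - weightedKoopman T μ n g := by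
  ext ω
  simp only [weightedKoopman, Pi.sub_apply, mul_sub]

theorem Nonsingular.lintegral_ofReal_wgtn_mul_comp [IsFiniteMeasure μ] (hT : Nonsingular T μ)
    {G : Ω → ℝ≥0∞} (hG : Measurable G) :
    ∫⁻ ω, ENNReal.ofReal (wgtn T μ n ω) * G ((⇑T)^[n] ω) ∂μ = ∫⁻ ω, G ω ∂μ := by
  have hac := (hT.quasiMeasurePreserving_symm.iterate n).absolutelyContinuous
  rw [← lintegral_rnDeriv_map_mul_comp (T.symm.measurable.iterate n) (T.measurable.iterate n)
    (Function.LeftInverse.iterate T.apply_symm_apply n) hac hG]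
  refine lintegral_congr_ae ?_
  filter_upwards [ofReal_toReal_ae_eq (Measure.rnDeriv_lt_top (μ.map (⇑T.symm)^[n]) μ)]
    with ω hω
  rw [wgtn, hω]

theorem Nonsingular.weightedKoopman_ae_eq (hT : Nonsingular T μ) (hfg : f =ᵐ[μ] g) :
    weightedKoopman T μ n f =ᵐ[μ] weightedKoopman T μ n g := by
  filter_upwards [(hT.quasiMeasurePreserving.iterate n).ae_eq_comp hfg] with ω hω
  simp only [weightedKoopman, Function.comp_apply] at hω ⊢
  rw [hω]

theorem Nonsingular.aestronglyMeasurable_weightedKoopman (hT : Nonsingular T μ)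
    (hf : AEStronglyMeasurable f μ) : AEStronglyMeasurable (weightedKoopman T μ n f) μ :=
  measurable_wgtn.sqrt.aestronglyMeasurable.mul
    (hf.comp_quasiMeasurePreserving (hT.quasiMeasurePreserving.iterate n))

theorem Nonsingular.eLpNorm_weightedKoopman [IsFiniteMeasure μ] (hT : Nonsingular T μ)
    (hf : AEStronglyMeasurable f μ) :
    eLpNorm (weightedKoopman T μ n f) 2 μ = eLpNorm f 2 μ := by
  wlog hfm : Measurable f generalizing f
  · rw [eLpNorm_congr_ae (hT.weightedKoopman_ae_eq hf.ae_eq_mk), eLpNorm_congr_ae hf.ae_eq_mk,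
      this hf.stronglyMeasurable_mk.aestronglyMeasurable hf.stronglyMeasurable_mk.measurable]
  have hsq : ∀ ω, ‖weightedKoopman T μ n f ω‖ₑ ^ (2 : ℝ) =
      ENNReal.ofReal (wgtn T μ n ω) * ‖f ((⇑T)^[n] ω)‖ₑ ^ (2 : ℝ) := fun ω => by
    rw [weightedKoopman, enorm_mul, ENNReal.mul_rpow_of_nonneg _ _ zero_le_two,
      Real.enorm_of_nonneg (Real.sqrt_nonneg _), ENNReal.ofReal_rpow_of_nonneg
      (Real.sqrt_nonneg _) zero_le_two, Real.rpow_two, Real.sq_sqrt (wgtn_nonneg ω)]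
  simp only [eLpNorm_eq_lintegral_rpow_enorm_toReal two_ne_zero ENNReal.ofNat_ne_top,
    ENNReal.toReal_ofNat, hsq]
  rw [hT.lintegral_ofReal_wgtn_mul_comp (G := fun ω => ‖f ω‖ₑ ^ (2 : ℝ)) (hfm.enorm.pow_const _)]

theorem Nonsingular.memLp_weightedKoopman [IsFiniteMeasure μ] (hT : Nonsingular T μ)
    (hf : MemLp f 2 μ) : MemLp (weightedKoopman T μ n f) 2 μ :=
  ⟨hT.aestronglyMeasurable_weightedKoopman hf.1, by
    rw [hT.eLpNorm_weightedKoopman hf.1]; exact hf.2⟩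

theorem Nonsingular.integrable_weightedKoopman_mul [IsFiniteMeasure μ] (hT : Nonsingular T μ)
    (hf : MemLp f 2 μ) (hg : MemLp g 2 μ) :
    Integrable (fun ω => weightedKoopman T μ n f ω * g ω) μ :=
  (hT.memLp_weightedKoopman hf).integrable_mul hg

theorem Nonsingular.abs_integral_weightedKoopman_mul_le [IsFiniteMeasure μ]
    (hT : Nonsingular T μ) (hf : MemLp f 2 μ) (hg : MemLp g 2 μ) :
    |∫ ω, weightedKoopman T μ n f ω * g ω ∂μ| ≤
      (eLpNorm f 2 μ).toReal * (eLpNorm g 2 μ).toReal := by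
  have hholder : ‖∫ ω, weightedKoopman T μ n f ω * g ω ∂μ‖ₑ ≤
      eLpNorm f 2 μ * eLpNorm g 2 μ :=
    calc ‖∫ ω, weightedKoopman T μ n f ω * g ω ∂μ‖ₑ
        ≤ eLpNorm (weightedKoopman T μ n f • g) 1 μ :=
          (enorm_integral_le_lintegral_enorm _).trans_eq eLpNorm_one_eq_lintegral_enorm.symm
      _ ≤ eLpNorm (weightedKoopman T μ n f) 2 μ * eLpNorm g 2 μ :=
          eLpNorm_smul_le_mul_eLpNorm hg.1 (hT.aestronglyMeasurable_weightedKoopman hf.1)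
      _ = eLpNorm f 2 μ * eLpNorm g 2 μ := by rw [hT.eLpNorm_weightedKoopman hf.1]
  rw [← Real.norm_eq_abs, ← toReal_enorm, ← ENNReal.toReal_mul]
  exact ENNReal.toReal_mono (ENNReal.mul_ne_top hf.2.ne hg.2.ne) hholder

theorem Nonsingular.abs_integral_weightedKoopman_mul_self_sub_le [IsFiniteMeasure μ]
    (hT : Nonsingular T μ) (hf : MemLp f 2 μ) (hg : MemLp g 2 μ) :
    |∫ ω, weightedKoopman T μ n f ω * f ω ∂μ - ∫ ω, weightedKoopman T μ n g ω * g ω ∂μ| ≤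
      (eLpNorm (f - g) 2 μ).toReal *
        (2 * (eLpNorm f 2 μ).toReal + (eLpNorm (f - g) 2 μ).toReal) := by
  set d := f - g
  have hd : MemLp d 2 μ := hf.sub hg
  have hpolar : ∫ ω, weightedKoopman T μ n f ω * f ω ∂μ - ∫ ω, weightedKoopman T μ n g ω * g ω ∂μ =
      ∫ ω, weightedKoopman T μ n f ω * d ω ∂μ + ∫ ω, weightedKoopman T μ n d ω * f ω ∂μ -
        ∫ ω, weightedKoopman T μ n d ω * d ω ∂μ := by
    have hsum : Integrable (fun ω =>
        weightedKoopman T μ n f ω * d ω + weightedKoopman T μ n d ω * f ω) μ :=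
      (hT.integrable_weightedKoopman_mul hf hd).add (hT.integrable_weightedKoopman_mul hd hf)
    rw [← integral_sub (hT.integrable_weightedKoopman_mul hf hf)
        (hT.integrable_weightedKoopman_mul hg hg),
      ← integral_add (hT.integrable_weightedKoopman_mul hf hd)
        (hT.integrable_weightedKoopman_mul hd hf),
      ← integral_sub hsum (hT.integrable_weightedKoopman_mul hd hd)]
    congr 1 with ω
    simp only [d, weightedKoopman_sub, Pi.sub_apply]
    ring
  rw [hpolar]
  have h₁ := hT.abs_integral_weightedKoopman_mul_le (n := n) hf hd
  have h₂ := hT.abs_integral_weightedKoopman_mul_le (n := n) hd hf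
  have h₃ := hT.abs_integral_weightedKoopman_mul_le (n := n) hd hd
  calc _ ≤ |∫ ω, weightedKoopman T μ n f ω * d ω ∂μ| + |∫ ω, weightedKoopman T μ n d ω * f ω ∂μ| +
        |∫ ω, weightedKoopman T μ n d ω * d ω ∂μ| :=
        (abs_sub _ _).trans (add_le_add_left (abs_add_le _ _) _)
    _ ≤ _ := by linarith

theorem Nonsingular.tendsto_integral_weightedKoopman_mul_self_of_norm_le [IsFiniteMeasure μ]
    (hT : Nonsingular T μ)
    (h : Tendsto (fun n : ℕ => ∫ ω, √(wgtn T μ n ω) ∂μ) atTop (𝓝 0))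
    {C : ℝ} (hC : ∀ ω, ‖g ω‖ ≤ C) :
    Tendsto (fun n => ∫ ω, weightedKoopman T μ n g ω * g ω ∂μ) atTop (𝓝 0) := by
  refine squeeze_zero_norm (fun n => ?_) (by simpa using h.const_mul (C * C))
  have hsqrt : Integrable (fun ω => √(wgtn T μ n ω)) μ := by
    have h1 := (hT.memLp_weightedKoopman (n := n) (memLp_const (1 : ℝ))).integrable one_le_two
    exact h1.congr (ae_of_all _ fun ω => mul_one _)
  rw [← integral_const_mul]
  refine norm_integral_le_of_norm_le (hsqrt.const_mul _) (ae_of_all _ fun ω => ?_)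
  have hC0 : 0 ≤ C := (norm_nonneg _).trans (hC ω)
  rw [weightedKoopman, norm_mul, norm_mul, Real.norm_of_nonneg (Real.sqrt_nonneg _)]
  calc √(wgtn T μ n ω) * ‖g ((⇑T)^[n] ω)‖ * ‖g ω‖ ≤ √(wgtn T μ n ω) * C * C := by
        gcongr <;> exact hC _
    _ = C * C * √(wgtn T μ n ω) := by ring

theorem Nonsingular.tendsto_integral_weightedKoopman_mul_self [IsFiniteMeasure μ]
    (hT : Nonsingular T μ)
    (h : Tendsto (fun n : ℕ => ∫ ω, √(wgtn T μ n ω) ∂μ) atTop (𝓝 0)) (hf : MemLp f 2 μ) :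
    Tendsto (fun n => ∫ ω, weightedKoopman T μ n f ω * f ω ∂μ) atTop (𝓝 0) := by
  rw [Metric.tendsto_nhds]
  intro ε hε
  set a := (eLpNorm f 2 μ).toReal
  obtain ⟨δ, hδε, hδ⟩ : ∃ δ : ℝ, δ * (2 * a + δ) < ε / 2 ∧ 0 < δ := by
    have hcont : Tendsto (fun δ : ℝ => δ * (2 * a + δ)) (𝓝[>] 0) (𝓝 0) := by
      simpa using ((by fun_prop : Continuous fun δ : ℝ => δ * (2 * a + δ)).tendsto 0).mono_left
        nhdsWithin_le_nhds
    exact ((hcont.eventually (gt_mem_nhds (half_pos hε))).and self_mem_nhdsWithin).exists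
  obtain ⟨g, hfg, hg⟩ :=
    hf.exists_simpleFunc_eLpNorm_sub_lt ENNReal.ofNat_ne_top (ENNReal.ofReal_pos.2 hδ).ne'
  obtain ⟨C, hC⟩ := g.exists_forall_norm_le
  have hfg' : (eLpNorm (f - ⇑g) 2 μ).toReal ≤ δ := ENNReal.toReal_le_of_le_ofReal hδ.le hfg.le
  filter_upwards [Metric.tendsto_nhds.1
    (hT.tendsto_integral_weightedKoopman_mul_self_of_norm_le h hC) (ε / 2) (half_pos hε)] with n hn
  have happrox := hT.abs_integral_weightedKoopman_mul_self_sub_le (n := n) hf hg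
  rw [Real.dist_eq, sub_zero] at hn ⊢
  have : (eLpNorm (f - ⇑g) 2 μ).toReal * (2 * a + (eLpNorm (f - ⇑g) 2 μ).toReal) ≤
      δ * (2 * a + δ) := by gcongr
  linarith [abs_sub_abs_le_abs_sub (∫ ω, weightedKoopman T μ n f ω * f ω ∂μ)
    (∫ ω, weightedKoopman T μ n g ω * g ω ∂μ)]

end weightedKoopman

/-- if `∫ √(w_{T^n}) dμ → 0` then `⟨U_T^n f, f⟩ → 0` for every `f ∈ L²(μ)`. -/
theorem sqrt_weight_decay_implies_zero_type
    {Ω : Type*} [MeasurableSpace Ω] (μ : Measure Ω) [IsProbabilityMeasure μ]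
    (T : Ω ≃ᵐ Ω) (hT : Nonsingular T μ)
    (h : Tendsto (fun n : ℕ => ∫ ω, Real.sqrt (wgtn T μ n ω) ∂μ) atTop (nhds 0)) :
    ∀ f : Ω → ℝ, MemLp f 2 μ →
      Tendsto (fun n : ℕ => ∫ ω, Real.sqrt (wgtn T μ n ω) * f ((⇑T)^[n] ω) * f ω ∂μ)
        atTop (nhds 0) :=
  fun _ hf => hT.tendsto_integral_weightedKoopman_mul_self h hf
end
end
end
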